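/- Let g be a derivator on [a,b] with continuous part g^C, normalized so g^C(a) = 0. Then the map g^C : ([a,b], M_{g^C}) → ([0, g^C(b)], L) is measurable, where L is the Lebesgue σ-algebra; moreover the pushforward of μ_{g^C} under g^C is the Lebesgue measure on [0, g^C(b)]. -/

import Mathlib

open MeasureTheory Set Function Filter Topology

noncomputable section

/-- A derivator: a non-decreasing, left-continuous function. -/
def IsDerivator (g : ℝ → ℝ) : Prop :=
  Monotone g ∧ ∀ x : ℝ, ContinuousWithinAt g (Set.Iic x) x

/-- The jump `Δ⁺g(t) = g(t⁺) - g(t)`. -/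
def jumpG (g : ℝ → ℝ) (t : ℝ) : ℝ := Function.rightLim g t - g t

/-- The set of discontinuity points of `g`. -/
def Dg (g : ℝ → ℝ) : Set ℝ := {t | 0 < jumpG g t}

/-- The jump part `g^B` of `g`, with base point `a`. -/
def jumpPart (g : ℝ → ℝ) (a : ℝ) : ℝ → ℝ := fun t =>
  if a < t then ∑' s : (Set.Ico a t : Set ℝ), jumpG g s
  else - ∑' s : (Set.Ico t a : Set ℝ), jumpG g s

/-- The continuous part `g^C = g - g^B` of `g`, with base point `a`. -/
def contPart (g : ℝ → ℝ) (a : ℝ) : ℝ → ℝ := fun t => g t - jumpPart g a t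

/-- The Lebesgue–Stieltjes outer measure associated to `g`, generated by
`μ_g([c,d)) = g d - g c` on half-open intervals. -/
def stieltjesOuter (g : ℝ → ℝ) : OuterMeasure ℝ :=
  OuterMeasure.ofFunction
    (fun s => ⨅ (p : ℝ × ℝ) (_ : s = Set.Ico p.1 p.2), ENNReal.ofReal (g p.2 - g p.1))
    (by
      refine le_antisymm ?_ zero_le
      refine le_trans (iInf₂_le ((0 : ℝ), (0 : ℝ)) ?_) ?_ <;> simp)

open Classical in
/-- The Lebesgue–Stieltjes measure of a non-decreasing left-continuous `g`: the measure with
`μ_g([c,d)) = g d - g c`.  It is realised as the Stieltjes measure of the right-continuous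
modification of `g`. -/
def stieltjesMeasure (g : ℝ → ℝ) : Measure ℝ :=
  if h : Monotone g then h.stieltjesFunction.measure else 0

variable {E : Type*} [NormedAddCommGroup E]

/-- `f` is `g`-continuous at `t` relative to the set `s`. -/
def GContWithin (g : ℝ → ℝ) (f : ℝ → E) (s : Set ℝ) (t : ℝ) : Prop :=
  ∀ ε > 0, ∃ δ > 0, ∀ u ∈ s, |g t - g u| < δ → ‖f t - f u‖ < ε

/-- `f` is `g`-continuous on the set `s`. -/
def GContOn (g : ℝ → ℝ) (f : ℝ → E) (s : Set ℝ) : Prop := ∀ t ∈ s, GContWithin g f s t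

/-- `t` lies in `C_g`: `g` is constant in a neighbourhood of `t`. -/
def InCg (g : ℝ → ℝ) (t : ℝ) : Prop :=
  ∃ ε > 0, ∀ u ∈ Set.Ioo (t - ε) (t + ε), ∀ v ∈ Set.Ioo (t - ε) (t + ε), g u = g v

/-- `t ∈ N_g⁻`: `t` is the left endpoint of a constancy interval of `g`, `t ∉ D_g`. -/
def InNgMinus (g : ℝ → ℝ) (t : ℝ) : Prop :=
  t ∉ Dg g ∧ ¬ InCg g t ∧
    ∃ ε > 0, ∀ u ∈ Set.Ioo t (t + ε), ∀ v ∈ Set.Ioo t (t + ε), g u = g v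

/-- `t ∈ N_g⁺`: `t` is the right endpoint of a constancy interval of `g`, `t ∉ D_g`. -/
def InNgPlus (g : ℝ → ℝ) (t : ℝ) : Prop :=
  t ∉ Dg g ∧ ¬ InCg g t ∧
    ∃ ε > 0, ∀ u ∈ Set.Ioo (t - ε) t, ∀ v ∈ Set.Ioo (t - ε) t, g u = g v

/-- The right endpoint `bₙ` of the constancy component of `g` containing `t`. -/
def compEnd (g : ℝ → ℝ) (t : ℝ) : ℝ := sSup {u | ∀ v ∈ Set.Icc t u, g v = g t}

open Classical in
/-- The Stieltjes `g`-derivative of `f : s → E` at `t`, in the extended sense: at points of `D_g`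
one takes the right-hand limit of the difference quotient, at points of `C_g` the right-hand
limit at the right endpoint of the constancy component, and elsewhere the limit of the difference
quotient restricted to points where `g` differs from `g t` (this covers the points of `N_g`). -/
def HasGDerivWithinAt [NormedSpace ℝ E] (g : ℝ → ℝ) (f : ℝ → E) (s : Set ℝ) (t : ℝ) (L : E) :
    Prop :=
  if t ∈ Dg g then
    Tendsto (fun u => (g u - g t)⁻¹ • (f u - f t)) (𝓝[s ∩ Set.Ioi t] t) (𝓝 L)
  else if InCg g t then
    Tendsto (fun u => (g u - g (compEnd g t))⁻¹ • (f u - f (compEnd g t)))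
      (𝓝[s ∩ Set.Ioi (compEnd g t)] (compEnd g t)) (𝓝 L)
  else
    Tendsto (fun u => (g u - g t)⁻¹ • (f u - f t)) (𝓝[s ∩ {u | g u ≠ g t}] t) (𝓝 L)

/-- `v` is `g`-absolutely continuous on `[0,T]`: it is an indefinite `μ_g`-integral. -/
def ACgOn (g : ℝ → ℝ) (v : ℝ → ℂ) (T : ℝ) : Prop :=
  ∃ h : ℝ → ℂ, MeasureTheory.IntegrableOn h (Set.Ico 0 T) (stieltjesMeasure g) ∧
    ∀ t ∈ Set.Icc 0 T, v t = v 0 + ∫ s in Set.Ico 0 t, h s ∂(stieltjesMeasure g)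

end

section Stmt5Aux

open MeasureTheory Set Function Filter Topology

variable {g : ℝ → ℝ}

private lemma jumpG_nonneg (hg : Monotone g) (t : ℝ) : 0 ≤ jumpG g t :=
  sub_nonneg.2 (hg.le_rightLim le_rfl)

private lemma sum_jumpG_le (hg : Monotone g) (F : Finset ℝ) :
    ∀ u v : ℝ, u ≤ v → ↑F ⊆ Set.Ico u v → ∑ t ∈ F, jumpG g t ≤ g v - g u := by
  classical
  induction F using Finset.induction_on_max with
  | empty => intro u v huv _; simpa using sub_nonneg.2 (hg huv)
  | insert m s hms ih =>
    intro u v huv hsub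
    have hm : m ∈ Set.Ico u v := hsub (by simp)
    have hsub' : ↑s ⊆ Set.Ico u m := fun x hx =>
      ⟨(hsub (by simp [hx])).1, hms x hx⟩
    rw [Finset.sum_insert (fun h => lt_irrefl m (hms m h))]
    have h1 : ∑ t ∈ s, jumpG g t ≤ g m - g u := ih u m hm.1 hsub'
    have h2 : Function.rightLim g m ≤ g v := hg.rightLim_le hm.2
    have h3 : jumpG g m ≤ g v - g m := by simp only [jumpG]; linarith
    linarith

private lemma sum_jumpG_subtype_le (hg : Monotone g) {u v : ℝ} (huv : u ≤ v)
    (F : Finset (Set.Ico u v : Set ℝ)) : ∑ s ∈ F, jumpG g ↑s ≤ g v - g u := by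
  classical
  have h : ∑ s ∈ F, jumpG g ↑s = ∑ t ∈ F.image Subtype.val, jumpG g t :=
    (Finset.sum_image (fun x _ y _ h => Subtype.val_injective h)).symm
  rw [h]
  refine sum_jumpG_le hg _ u v huv ?_
  intro x hx
  simp only [Finset.coe_image, Set.mem_image, Finset.mem_coe] at hx
  obtain ⟨s, -, rfl⟩ := hx
  exact s.2

private lemma summable_jumpG (hg : Monotone g) {u v : ℝ} (huv : u ≤ v) :
    Summable (fun s : (Set.Ico u v : Set ℝ) => jumpG g ↑s) := by
  refine summable_of_sum_le (c := g v - g u) (fun s => jumpG_nonneg hg ↑s) ?_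
  exact fun F => sum_jumpG_subtype_le hg huv F

private lemma tsum_jumpG_le (hg : Monotone g) {u v : ℝ} (huv : u ≤ v) :
    ∑' s : (Set.Ico u v : Set ℝ), jumpG g ↑s ≤ g v - g u :=
  Summable.tsum_le_of_sum_le (summable_jumpG hg huv) (fun F => sum_jumpG_subtype_le hg huv F)

private lemma tsum_jumpG_nonneg (hg : Monotone g) {u v : ℝ} :
    0 ≤ ∑' s : (Set.Ico u v : Set ℝ), jumpG g ↑s :=
  tsum_nonneg (fun s => jumpG_nonneg hg _)

private lemma tsum_Ico_split (hg : Monotone g) {u m v : ℝ} (h1 : u ≤ m) (h2 : m ≤ v) :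
    (∑' s : (Set.Ico u v : Set ℝ), jumpG g ↑s) =
      (∑' s : (Set.Ico u m : Set ℝ), jumpG g ↑s) + ∑' s : (Set.Ico m v : Set ℝ), jumpG g ↑s := by
  have h := Summable.tsum_union_disjoint (f := jumpG g) (Set.Ico_disjoint_Ico_same (a := u) (b := m) (c := v))
    (summable_jumpG hg h1) (summable_jumpG hg h2)
  rw [Set.Ico_union_Ico_eq_Ico h1 h2] at h
  exact h

private lemma jumpPart_sub (hg : Monotone g) (a : ℝ) {s t : ℝ} (hst : s ≤ t) :
    jumpPart g a t - jumpPart g a s = ∑' x : (Set.Ico s t : Set ℝ), jumpG g ↑x := by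
  simp only [jumpPart]
  by_cases h1 : a < s
  · rw [if_pos h1, if_pos (h1.trans_le hst)]
    have h := tsum_Ico_split hg h1.le hst
    linarith
  · rw [if_neg h1]
    push_neg at h1
    by_cases h2 : a < t
    · rw [if_pos h2]
      have h := tsum_Ico_split hg h1 h2.le
      linarith
    · rw [if_neg h2]
      push_neg at h2
      have h := tsum_Ico_split hg hst h2
      linarith

private lemma contPart_mono (hg : Monotone g) (a : ℝ) : Monotone (contPart g a) := by
  intro s t hst
  have h1 := jumpPart_sub hg a hst
  have h2 := tsum_jumpG_le hg hst
  simp only [contPart]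
  linarith

private lemma jumpG_le_tsum (hg : Monotone g) {t u : ℝ} (htu : t < u) :
    jumpG g t ≤ ∑' x : (Set.Ico t u : Set ℝ), jumpG g ↑x :=
  Summable.le_tsum (summable_jumpG hg htu.le) ⟨t, le_rfl, htu⟩ (fun _ _ => jumpG_nonneg hg _)

private lemma contPart_continuous (hg : IsDerivator g) (a : ℝ) :
    Continuous (contPart g a) := by
  obtain ⟨hm, hlc⟩ := hg
  rw [continuous_iff_continuousAt]
  intro t
  rw [continuousAt_iff_continuous_left'_right']
  constructor
  · -- left continuity
    have hgt : Tendsto g (𝓝[<] t) (𝓝 (g t)) :=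
      (hlc t).mono_left (nhdsWithin_mono t Set.Iio_subset_Iic_self)
    have hB : Tendsto (jumpPart g a) (𝓝[<] t) (𝓝 (jumpPart g a t)) := by
      have hlow : Tendsto (fun u => jumpPart g a t - (g t - g u)) (𝓝[<] t)
          (𝓝 (jumpPart g a t)) := by
        have h := (tendsto_const_nhds (x := jumpPart g a t) (f := 𝓝[<] t)).sub
          ((tendsto_const_nhds (x := g t) (f := 𝓝[<] t)).sub hgt)
        simpa using h
      refine tendsto_of_tendsto_of_tendsto_of_le_of_le' hlow tendsto_const_nhds ?_ ?_
      · filter_upwards [self_mem_nhdsWithin] with u hu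
        have h1 := jumpPart_sub hm a (le_of_lt hu)
        have h2 := tsum_jumpG_le hm (le_of_lt (show u < t from hu))
        linarith
      · filter_upwards [self_mem_nhdsWithin] with u hu
        have h1 := jumpPart_sub hm a (le_of_lt (show u < t from hu))
        have h3 := tsum_jumpG_nonneg hm (u := u) (v := t)
        linarith
    have h := hgt.sub hB
    exact h
  · -- right continuity
    have hrt := hm.tendsto_rightLim t
    have hreq : Function.rightLim g t = g t + jumpG g t := by simp [jumpG]
    rw [hreq] at hrt
    have hB : Tendsto (jumpPart g a) (𝓝[>] t) (𝓝 (jumpPart g a t + jumpG g t)) := by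
      have hup : Tendsto (fun u => jumpPart g a t + (g u - g t)) (𝓝[>] t)
          (𝓝 (jumpPart g a t + jumpG g t)) := by
        have h := (tendsto_const_nhds (x := jumpPart g a t) (f := 𝓝[>] t)).add
          (hrt.sub (tendsto_const_nhds (x := g t) (f := 𝓝[>] t)))
        simpa using h
      refine tendsto_of_tendsto_of_tendsto_of_le_of_le' tendsto_const_nhds hup ?_ ?_
      · filter_upwards [self_mem_nhdsWithin] with u hu
        have h1 := jumpPart_sub hm a (le_of_lt (show t < u from hu))
        have h2 := jumpG_le_tsum hm (show t < u from hu)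
        linarith
      · filter_upwards [self_mem_nhdsWithin] with u hu
        have h1 := jumpPart_sub hm a (le_of_lt (show t < u from hu))
        have h2 := tsum_jumpG_le hm (le_of_lt (show t < u from hu))
        linarith
    have h := hrt.sub hB
    have heq : g t + jumpG g t - (jumpPart g a t + jumpG g t) = contPart g a t := by
      simp only [contPart]; ring
    rw [heq] at h
    exact h

private lemma contPart_base (g : ℝ → ℝ) (a : ℝ) (hga : g a = 0) : contPart g a a = 0 := by
  simp [contPart, jumpPart, hga, lt_irrefl, Set.Ico_self, tsum_empty]

end Stmt5Aux

/-- `g^C : ([a,b], M_{g^C}) → ([0, g^C(b)], L)` is measurable, and the pushforward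
of `μ_{g^C}` (restricted to `[a,b]`) under `g^C` is the Lebesgue measure on `[0, g^C(b)]`. -/
theorem stmt5 (g : ℝ → ℝ) (hg : IsDerivator g) (a b : ℝ) (hab : a ≤ b) (hga : g a = 0) :
    (∀ E : Set ℝ, E ⊆ Set.Icc 0 (contPart g a b) →
      MeasureTheory.NullMeasurableSet E MeasureTheory.volume →
      (stieltjesOuter (contPart g a)).IsCaratheodory (contPart g a ⁻¹' E ∩ Set.Icc a b)) ∧
    MeasureTheory.Measure.map (contPart g a)
        ((stieltjesMeasure (contPart g a)).restrict (Set.Icc a b)) =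
      MeasureTheory.volume.restrict (Set.Icc 0 (contPart g a b)) := by
  classical
  obtain ⟨hm, hlc⟩ := hg
  set φ := contPart g a with hφdef
  have hφm : Monotone φ := contPart_mono hm a
  have hφc : Continuous φ := contPart_continuous ⟨hm, hlc⟩ a
  have hφa : φ a = 0 := contPart_base g a hga
  set f := hφm.stieltjesFunction with hfdef
  have hfφ : ∀ x, f x = φ x := fun x => by
    rw [hφm.stieltjesFunction_eq]
    exact rightLim_eq_of_tendsto
      hφc.continuousAt.continuousWithinAt
  have hfeq : ⇑f = φ := funext hfφ
  have hlfφ : ∀ x, Function.leftLim (⇑f) x = φ x := fun x => by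
    rw [hfeq]
    exact leftLim_eq_of_tendsto
      hφc.continuousAt.continuousWithinAt
  have hsm : stieltjesMeasure φ = f.measure := by
    unfold stieltjesMeasure
    rw [dif_pos hφm]
  set M := φ b with hMdef
  have hM0 : (0 : ℝ) ≤ M := by rw [← hφa]; exact hφm hab
  have hIcc : ∀ u v : ℝ, f.measure (Set.Icc u v) = ENNReal.ofReal (φ v - φ u) := fun u v => by
    rw [f.measure_Icc, hfφ, hlfφ]
  have hIco : ∀ u v : ℝ, f.measure (Set.Ico u v) = ENNReal.ofReal (φ v - φ u) := fun u v => by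
    rw [f.measure_Ico, hlfφ, hlfφ]
  -- key computation: measure of sublevel sets
  have key : ∀ c : ℝ, f.measure (φ ⁻¹' Set.Iic c ∩ Set.Icc a b) = ENNReal.ofReal (min c M) := by
    intro c
    rcases lt_or_ge c 0 with hc | hc
    · have hempty : φ ⁻¹' Set.Iic c ∩ Set.Icc a b = ∅ := by
        rw [Set.eq_empty_iff_forall_notMem]
        rintro x ⟨h1, h2, h3⟩
        rw [Set.mem_preimage, Set.mem_Iic] at h1
        have h4 : (0 : ℝ) ≤ φ x := by rw [← hφa]; exact hφm h2
        linarith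
      rw [hempty, measure_empty, eq_comm, ENNReal.ofReal_eq_zero]
      exact (min_le_left _ _).trans hc.le
    · rcases le_or_gt M c with hMc | hcM
      · have hfull : φ ⁻¹' Set.Iic c ∩ Set.Icc a b = Set.Icc a b := by
          exact Set.inter_eq_self_of_subset_right (fun x hx => le_trans (hφm hx.2) hMc)
        rw [hfull, hIcc, hφa, sub_zero, min_eq_right hMc]
      · set S := φ ⁻¹' Set.Iic c ∩ Set.Icc a b with hSdef
        have hSclosed : IsClosed S := (isClosed_Iic.preimage hφc).inter isClosed_Icc
        have hSne : S.Nonempty := ⟨a, by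
          constructor
          · rw [Set.mem_preimage, Set.mem_Iic, hφa]; exact hc
          · exact ⟨le_rfl, hab⟩⟩
        have hSbdd : BddAbove S := ⟨b, fun x hx => hx.2.2⟩
        set s := sSup S with hsdef
        have hsS : s ∈ S := hSclosed.csSup_mem hSne hSbdd
        have hsb : s < b := by
          rcases lt_or_eq_of_le hsS.2.2 with h | h
          · exact h
          · exfalso
            have h2 := hsS.1
            rw [Set.mem_preimage, Set.mem_Iic, h] at h2
            exact absurd h2 (not_le.2 hcM)
        have hsc : φ s = c := by
          refine le_antisymm hsS.1 ?_
          have htend : Tendsto φ (𝓝[>] s) (𝓝 (φ s)) := hφc.continuousAt.continuousWithinAt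
          refine ge_of_tendsto htend ?_
          filter_upwards [Ioo_mem_nhdsGT_of_mem ⟨le_rfl, hsb⟩] with u hu
          by_contra hlt
          push_neg at hlt
          have huS : u ∈ S := ⟨hlt.le, le_trans hsS.2.1 hu.1.le, hu.2.le⟩
          exact absurd (le_csSup hSbdd huS) (not_le.2 hu.1)
        have hSint : S = Set.Icc a s := by
          apply Set.Subset.antisymm
          · exact fun x hx => ⟨hx.2.1, le_csSup hSbdd hx⟩
          · intro x hx
            refine ⟨?_, hx.1, le_trans hx.2 hsS.2.2⟩
            rw [Set.mem_preimage, Set.mem_Iic, ← hsc]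
            exact hφm hx.2
        rw [hSint, hIcc, hφa, sub_zero, hsc, min_eq_left hcM.le]
  -- the pushforward identity
  have hrestr_fin : IsFiniteMeasure (f.measure.restrict (Set.Icc a b)) := by
    constructor
    rw [Measure.restrict_apply_univ, hIcc]
    exact ENNReal.ofReal_lt_top
  have hmap : Measure.map φ (f.measure.restrict (Set.Icc a b)) =
      MeasureTheory.volume.restrict (Set.Icc 0 M) := by
    have hfin : IsFiniteMeasure (Measure.map φ (f.measure.restrict (Set.Icc a b))) := by
      constructor
      rw [Measure.map_apply hφc.measurable MeasurableSet.univ, Set.preimage_univ,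
        Measure.restrict_apply_univ, hIcc]
      exact ENNReal.ofReal_lt_top
    refine Measure.ext_of_Iic _ _ (fun c => ?_)
    rw [Measure.map_apply hφc.measurable measurableSet_Iic,
      Measure.restrict_apply (hφc.measurable measurableSet_Iic), key,
      Measure.restrict_apply measurableSet_Iic]
    rcases lt_or_ge c 0 with hc | hc
    · have h1 : Set.Iic c ∩ Set.Icc 0 M = ∅ := by
        rw [Set.eq_empty_iff_forall_notMem]
        rintro x ⟨h1, h2, h3⟩
        rw [Set.mem_Iic] at h1
        linarith
      rw [h1, measure_empty, ENNReal.ofReal_eq_zero]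
      exact (min_le_left _ _).trans hc.le
    · have h1 : Set.Iic c ∩ Set.Icc 0 M = Set.Icc 0 (min c M) := by
        ext x
        simp only [Set.mem_inter_iff, Set.mem_Iic, Set.mem_Icc, le_min_iff]
        tauto
      rw [h1, Real.volume_Icc, sub_zero]
  -- the singleton lemma for the outer measure
  have hsingleton : ∀ v : ℝ, stieltjesOuter φ {v} = 0 := by
    intro v
    refine le_antisymm ?_ zero_le
    have hb' : ∀ ε : ℝ, 0 < ε → stieltjesOuter φ {v} ≤ ENNReal.ofReal ε := by
      intro ε hε
      have htend : Tendsto φ (𝓝[>] v) (𝓝 (φ v)) := hφc.continuousAt.continuousWithinAt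
      have hev : ∀ᶠ u in 𝓝[>] v, φ u < φ v + ε :=
        htend.eventually_lt_const (by linarith)
      obtain ⟨u, hu1, hu2⟩ := (hev.and self_mem_nhdsWithin).exists
      calc stieltjesOuter φ {v} ≤ stieltjesOuter φ (Set.Ico v u) := by
            refine measure_mono ?_
            intro x hx
            rw [Set.mem_singleton_iff] at hx
            subst hx
            exact ⟨le_rfl, hu2⟩
        _ ≤ ENNReal.ofReal (φ u - φ v) :=
            le_trans (OuterMeasure.ofFunction_le _) (iInf_le_of_le (v, u) (iInf_le _ rfl))
        _ ≤ ENNReal.ofReal ε := ENNReal.ofReal_le_ofReal (by linarith)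
    refine ENNReal.le_of_forall_pos_le_add fun ε hε _ => ?_
    rw [zero_add]
    calc stieltjesOuter φ {v} ≤ ENNReal.ofReal ε := hb' ε (by exact_mod_cast hε)
      _ = (ε : ENNReal) := ENNReal.ofReal_coe_nnreal
  -- identification of the two outer measures
  have houter : stieltjesOuter φ = f.outer := by
    apply le_antisymm
    · refine OuterMeasure.le_ofFunction.2 fun s => ?_
      rw [f.length_eq]
      refine le_iInf fun u => le_iInf fun v => le_iInf fun hsub => ?_
      calc stieltjesOuter φ s ≤ stieltjesOuter φ (Set.Ioc u v) :=
            measure_mono (fun x hx => hsub ⟨hx, not_isBot x⟩)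
        _ ≤ stieltjesOuter φ (Set.Ico u v ∪ {v}) := by
            refine measure_mono ?_
            intro x hx
            rcases eq_or_lt_of_le hx.2 with h | h
            · exact Or.inr (by rw [Set.mem_singleton_iff]; exact h)
            · exact Or.inl ⟨hx.1.le, h⟩
        _ ≤ stieltjesOuter φ (Set.Ico u v) + stieltjesOuter φ {v} := measure_union_le _ _
        _ ≤ ENNReal.ofReal (φ v - φ u) + 0 := add_le_add
            (le_trans (OuterMeasure.ofFunction_le _) (iInf_le_of_le (u, v) (iInf_le _ rfl)))
            (le_of_eq (hsingleton v))
        _ = ENNReal.ofReal (f v - f u) := by rw [add_zero, hfφ, hfφ]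
    · refine OuterMeasure.le_ofFunction.2 fun s => ?_
      refine le_iInf fun p => le_iInf fun hp => ?_
      subst hp
      have h1 : f.outer (Set.Ico p.1 p.2) = f.measure (Set.Ico p.1 p.2) := by
        rw [StieltjesFunction.measure]; rfl
      rw [h1, hIco]
  constructor
  · -- measurability statement
    intro E _hE hEnm
    rw [houter]
    obtain ⟨B, hBmeas, hEB⟩ := hEnm
    have hnull : MeasureTheory.volume ((E \ B) ∪ (B \ E)) = 0 := by
      rw [MeasureTheory.ae_eq_set] at hEB
      exact measure_union_null hEB.1 hEB.2
    obtain ⟨N, hNsup, hNmeas, hNnull⟩ := exists_measurable_superset_of_null hnull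
    have hNzero : f.outer (φ ⁻¹' N ∩ Set.Icc a b) = 0 := by
      have heq : f.outer (φ ⁻¹' N ∩ Set.Icc a b) = f.measure (φ ⁻¹' N ∩ Set.Icc a b) := by
        rw [StieltjesFunction.measure]; rfl
      rw [heq, ← Measure.restrict_apply (hφc.measurable hNmeas),
        ← Measure.map_apply hφc.measurable hNmeas, hmap, Measure.restrict_apply hNmeas]
      exact le_antisymm (le_trans (measure_mono Set.inter_subset_left) (le_of_eq hNnull))
        zero_le
    have hnullcara : ∀ T : Set ℝ, T ⊆ φ ⁻¹' N ∩ Set.Icc a b → f.outer.IsCaratheodory T := by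
      intro T hT
      have hT0 : f.outer T = 0 :=
        le_antisymm (le_trans (measure_mono hT) (le_of_eq hNzero)) zero_le
      refine (OuterMeasure.isCaratheodory_iff_le' f.outer).2 fun t => ?_
      have h1 : f.outer (t ∩ T) ≤ 0 :=
        le_trans (measure_mono Set.inter_subset_right) (le_of_eq hT0)
      have h2 : f.outer (t \ T) ≤ f.outer t := measure_mono Set.diff_subset
      calc f.outer (t ∩ T) + f.outer (t \ T) ≤ 0 + f.outer t := add_le_add h1 h2
        _ = f.outer t := zero_add _
    have hborelcara : ∀ T : Set ℝ, MeasurableSet T → f.outer.IsCaratheodory T := by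
      intro T hT
      have hT' : MeasurableSet[borel ℝ] T := by rwa [← BorelSpace.measurable_eq (α := ℝ)]
      exact f.borel_le_measurable T hT'
    have hid : φ ⁻¹' E ∩ Set.Icc a b =
        ((φ ⁻¹' B ∩ Set.Icc a b) \ (φ ⁻¹' (B \ E) ∩ Set.Icc a b)) ∪
          (φ ⁻¹' (E \ B) ∩ Set.Icc a b) := by
      ext x
      by_cases hxI : x ∈ Set.Icc a b <;> by_cases hxB : φ x ∈ B <;> by_cases hxE : φ x ∈ E <;>
        simp [Set.mem_preimage, Set.mem_diff, hxI, hxB, hxE]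
    rw [hid]
    refine f.outer.isCaratheodory_union
      (f.outer.isCaratheodory_diff
        (hborelcara _ ((hφc.measurable hBmeas).inter measurableSet_Icc))
        (hnullcara _ ?_))
      (hnullcara _ ?_)
    · exact fun x hx => ⟨hNsup (Set.mem_union_right _ hx.1), hx.2⟩
    · exact fun x hx => ⟨hNsup (Set.mem_union_left _ hx.1), hx.2⟩
  · rw [hsm, hmap]
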